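/- arXiv:1406.7402 — 3 statements merged into one kernel-verified Lean document; each statement's English description precedes it below -/
import Mathlib

section
/- Let X be a normal topological space and let 𝒜 be a family of pairwise disjoint, nonempty closed subsets of X. Then 𝒜, equipped with the sub-Vietoris topology (the topology generated by the sets {A ∈ 𝒜 | A ∩ K = ∅} for K ⊆ X closed), is a Hausdorff topological space. -/
/-- The sub-Vietoris topology on the powerset of a topological space `X`:
generated by the sets `{A | A ∩ K = ∅}` for `K ⊆ X` closed. -/
def subVietoris (X : Type*) [TopologicalSpace X] : TopologicalSpace (Set X) :=
  TopologicalSpace.generateFrom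
    {S : Set (Set X) | ∃ K : Set X, IsClosed K ∧ S = {A : Set X | A ∩ K = ∅}}

theorem subVietoris_t2_of_pairwise_disjoint_closed
    {X : Type*} [TopologicalSpace X] [NormalSpace X]
    (𝒜 : Set (Set X))
    (hne : ∀ A ∈ 𝒜, A.Nonempty)
    (hcl : ∀ A ∈ 𝒜, IsClosed A)
    (hdisj : ∀ A ∈ 𝒜, ∀ B ∈ 𝒜, A ≠ B → A ∩ B = ∅) :
    @T2Space 𝒜 (TopologicalSpace.induced Subtype.val (subVietoris X)) := by
  letI : TopologicalSpace (Set X) := subVietoris X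
  letI : TopologicalSpace 𝒜 := TopologicalSpace.induced Subtype.val (subVietoris X)
  constructor
  rintro ⟨A, hA⟩ ⟨B, hB⟩ hAB
  have hABne : A ≠ B := fun h => hAB (Subtype.ext h)
  obtain ⟨U, V, hU, hV, hAU, hBV, hUV⟩ :=
    NormalSpace.normal A B (hcl A hA) (hcl B hB)
      (Set.disjoint_iff_inter_eq_empty.mpr (hdisj A hA B hB hABne))
  refine ⟨Subtype.val ⁻¹' {C : Set X | C ∩ Uᶜ = ∅},
          Subtype.val ⁻¹' {C : Set X | C ∩ Vᶜ = ∅}, ?_, ?_, ?_, ?_, ?_⟩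
  · exact isOpen_induced (TopologicalSpace.isOpen_generateFrom_of_mem ⟨Uᶜ, hU.isClosed_compl, rfl⟩)
  · exact isOpen_induced (TopologicalSpace.isOpen_generateFrom_of_mem ⟨Vᶜ, hV.isClosed_compl, rfl⟩)
  · show A ∩ Uᶜ = ∅
    rw [← Set.disjoint_iff_inter_eq_empty, Set.disjoint_compl_right_iff_subset]
    exact hAU
  · show B ∩ Vᶜ = ∅
    rw [← Set.disjoint_iff_inter_eq_empty, Set.disjoint_compl_right_iff_subset]
    exact hBV
  · rw [Set.disjoint_iff_inter_eq_empty, Set.eq_empty_iff_forall_notMem]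
    rintro ⟨C, hC⟩ ⟨h1, h2⟩
    have hCU : C ⊆ U := by
      rw [← Set.disjoint_compl_right_iff_subset, Set.disjoint_iff_inter_eq_empty]; exact h1
    have hCV : C ⊆ V := by
      rw [← Set.disjoint_compl_right_iff_subset, Set.disjoint_iff_inter_eq_empty]; exact h2
    obtain ⟨x, hx⟩ := hne C hC
    exact Set.disjoint_iff_inter_eq_empty.mp hUV |>.symm ▸
      (Set.mem_inter (hCU hx) (hCV hx) : x ∈ U ∩ V) |>.elim
end

section
/- Let G̃ = A × G be the extension of a group G by an abelian group A via a 2-cocycle h, let H̃ ≤ G̃ be a subgroup, and set A_H̃ = {a ∈ A | (a,e) ∈ H̃}. Suppose g ↦ a_g is a function such that (a_g, g) ∈ H̃ whenever there exists some a with (a,g) ∈ H̃, and suppose that for all such g and all a ∈ A with (a,g') ∈ H̃ for some g', the action condition holds: g⁻¹·b − b ∈ A_H̃ for all b in the relevant coset differences (i.e., the projection of H̃ to G acts trivially on the cosets of A_H̃). Then for (a₁,g₁), (a₂,g₂) in the set Ĥ = {(a,g) ∈ G̃ | ∃a'' (a'',g) ∈ H̃}, one has (a₁,g₁)·(a₂,g₂)⁻¹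 ∈ H̃ if and only if (a₁ − a_{g₁}) − (a₂ − a_{g₂}) ∈ A_H̃. -/
/-!
The subgroup `H̃` meets the fibre of `G̃ → G` over each `g` in its projection in a coset of
`A_H̃`, namely the one through `(a_g, g)`. Hence `(a₁,g₁)(a₂,g₂)⁻¹ ∈ H̃` iff its first coordinate
differs from that of `(a_{g₁},g₁)(a_{g₂},g₂)⁻¹ ∈ H̃` by an element of `A_H̃`. That difference is
`(a₁ - a_{g₁}) - g₁g₂⁻¹ · (a₂ - a_{g₂})`, and since `g₁g₂⁻¹` acts trivially modulo `A_H̃` it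
may be dropped from the second term.
-/

/-- The multiplication of the extension `A × G` determined by an action and a 2-cocycle. -/
def extMul {G A : Type*} [Group G] [AddCommGroup A] (act : G →* Multiplicative (AddAut A))
    (h : G → G → A) (p q : A × G) : A × G :=
  (p.1 + Multiplicative.toAdd (act p.2) q.1 + h p.2 q.2, p.2 * q.2)

/-- The inverse of the extension `A × G`. -/
def extInv {G A : Type*} [Group G] [AddCommGroup A] (act : G →* Multiplicative (AddAut A))
    (h : G → G → A) (p : A × G) : A × G :=
  (-(Multiplicative.toAdd (act p.2⁻¹) p.1) - h p.2⁻¹ p.2, p.2⁻¹)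

section Extension

variable {G A : Type*} [Group G] [AddCommGroup A]
  (act : G →* Multiplicative (AddAut A)) (h : G → G → A)

def IsCocycle : Prop :=
  ∀ g₁ g₂ g₃ : G,
    h g₁ g₂ + h (g₁ * g₂) g₃ = h g₁ (g₂ * g₃) + Multiplicative.toAdd (act g₁) (h g₂ g₃)

theorem toAdd_act_mul_apply (g k : G) (x : A) :
    Multiplicative.toAdd (act (g * k)) x =
      Multiplicative.toAdd (act g) (Multiplicative.toAdd (act k) x) := by
  rw [map_mul, toAdd_mul, AddAut.add_apply]

theorem toAdd_act_apply_toAdd_act_inv_apply (g : G) (x : A) :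
    Multiplicative.toAdd (act g) (Multiplicative.toAdd (act g⁻¹) x) = x := by
  rw [← toAdd_act_mul_apply, mul_inv_cancel, map_one, toAdd_one, AddAut.zero_apply]

theorem extMul_one_left (hone₂ : ∀ g : G, h 1 g = 0) (a b : A) (g : G) :
    extMul act h (a, 1) (b, g) = (a + b, g) := by
  simp [extMul, hone₂]

theorem extInv_one (hone₂ : ∀ g : G, h 1 g = 0) (a : A) :
    extInv act h (a, 1) = (-a, 1) := by
  simp [extInv, hone₂]

theorem toAdd_act_apply_cocycle_inv_self
    (hcoc : IsCocycle act h) (hone₁ : ∀ g : G, h g 1 = 0) (hone₂ : ∀ g : G, h 1 g = 0) (g : G) :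
    Multiplicative.toAdd (act g) (h g⁻¹ g) = h g g⁻¹ := by
  simpa [hone₁, hone₂] using (hcoc g g⁻¹ g).symm

theorem extMul_extInv_of_snd_eq
    (hcoc : IsCocycle act h) (hone₁ : ∀ g : G, h g 1 = 0) (hone₂ : ∀ g : G, h 1 g = 0)
    (a b : A) (g : G) :
    extMul act h (a, g) (extInv act h (b, g)) = (a - b, 1) := by
  simp only [extMul, extInv, map_sub, map_neg, toAdd_act_apply_toAdd_act_inv_apply,
    toAdd_act_apply_cocycle_inv_self act h hcoc hone₁ hone₂, mul_inv_cancel, Prod.mk.injEq,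
    and_true]
  abel

theorem fst_extMul_extInv_sub_fst_extMul_extInv (a₁ a₂ b₁ b₂ : A) (g₁ g₂ : G) :
    (extMul act h (a₁, g₁) (extInv act h (a₂, g₂))).1 -
        (extMul act h (b₁, g₁) (extInv act h (b₂, g₂))).1 =
      (a₁ - b₁) - Multiplicative.toAdd (act (g₁ * g₂⁻¹)) (a₂ - b₂) := by
  simp only [extMul, extInv, toAdd_act_mul_apply, map_sub, map_neg]
  abel

structure IsExtSubgroup (H : Set (A × G)) : Prop where
  one_mem : ((0 : A), (1 : G)) ∈ H
  mul_mem : ∀ p ∈ H, ∀ q ∈ H, extMul act h p q ∈ H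
  inv_mem : ∀ p ∈ H, extInv act h p ∈ H

namespace IsExtSubgroup

variable {act h} {H : Set (A × G)} (hH : IsExtSubgroup act h H) (hone₂ : ∀ g : G, h 1 g = 0)

/-- `A_H̃ = {a | (a, 1) ∈ H̃}`. -/
def fiberAtOne : AddSubgroup A where
  carrier := {a | (a, (1 : G)) ∈ H}
  zero_mem' := hH.one_mem
  add_mem' {a b} ha hb := by
    have := hH.mul_mem _ ha _ hb
    rwa [extMul_one_left act h hone₂] at this
  neg_mem' {a} ha := by
    have := hH.inv_mem _ ha
    rwa [extInv_one act h hone₂] at this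

theorem mem_iff_sub_mem_fiberAtOne
    (hcoc : IsCocycle act h) (hone₁ : ∀ g : G, h g 1 = 0) {b : A} {g : G} (hb : (b, g) ∈ H)
    (a : A) :
    (a, g) ∈ H ↔ a - b ∈ hH.fiberAtOne hone₂ := by
  constructor
  · intro ha
    have := hH.mul_mem _ ha _ (hH.inv_mem _ hb)
    rwa [extMul_extInv_of_snd_eq act h hcoc hone₁ hone₂] at this
  · intro hab
    have := hH.mul_mem _ hab _ hb
    rwa [extMul_one_left act h hone₂, sub_add_cancel] at this

end IsExtSubgroup

end Extension

theorem AddSubgroup.sub_mem_iff_of_sub_mem {A : Type*} [AddCommGroup A] (S : AddSubgroup A)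
    {b y : A} (hy : y - b ∈ S) (x : A) : x - y ∈ S ↔ x - b ∈ S := by
  rw [← S.add_mem_cancel_right hy, sub_add_sub_cancel]

/-- The key computation behind Lemma 5.4 of the paper: in the extension `G̃ = A × G`,
given a subgroup `H̃`, a choice `g ↦ a_g` with `(a_g, g) ∈ H̃`, and assuming the projection
of `H̃` acts trivially on the cosets of `A_H̃ = {a | (a,1) ∈ H̃}`, we have
`(a₁,g₁)·(a₂,g₂)⁻¹ ∈ H̃ ↔ (a₁ − a_{g₁}) − (a₂ − a_{g₂}) ∈ A_H̃`. -/
theorem ext_coset_criterion {G A : Type*} [Group G] [AddCommGroup A]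
    (act : G →* Multiplicative (AddAut A)) (h : G → G → A)
    (hcoc : ∀ g₁ g₂ g₃ : G,
      h g₁ g₂ + h (g₁ * g₂) g₃ = h g₁ (g₂ * g₃) + Multiplicative.toAdd (act g₁) (h g₂ g₃))
    (hone₁ : ∀ g : G, h g 1 = 0) (hone₂ : ∀ g : G, h 1 g = 0)
    (H : Set (A × G))
    (Hone : ((0 : A), (1 : G)) ∈ H)
    (Hmul : ∀ p ∈ H, ∀ q ∈ H, extMul act h p q ∈ H)
    (Hinv : ∀ p ∈ H, extInv act h p ∈ H)
    (aMap : G → A)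
    (haMap : ∀ g : G, (∃ a : A, (a, g) ∈ H) → (aMap g, g) ∈ H)
    (htriv : ∀ g : G, (∃ a : A, (a, g) ∈ H) → ∀ b : A, Multiplicative.toAdd (act g) b - b ∈ {a : A | (a, (1 : G)) ∈ H})
    (a₁ a₂ : A) (g₁ g₂ : G)
    (h₁ : ∃ a : A, (a, g₁) ∈ H) (h₂ : ∃ a : A, (a, g₂) ∈ H) :
    extMul act h (a₁, g₁) (extInv act h (a₂, g₂)) ∈ H ↔
      (a₁ - aMap g₁) - (a₂ - aMap g₂) ∈ {a : A | (a, (1 : G)) ∈ H} := by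
  have hH : IsExtSubgroup act h H := ⟨Hone, Hmul, Hinv⟩
  set S := hH.fiberAtOne hone₂
  have hbase := Hmul _ (haMap g₁ h₁) _ (Hinv _ (haMap g₂ h₂))
  have hg : ∃ a : A, (a, g₁ * g₂⁻¹) ∈ H := ⟨_, hbase⟩
  change _ ↔ _ ∈ S
  rw [← S.sub_mem_iff_of_sub_mem (htriv _ hg (a₂ - aMap g₂)),
    ← fst_extMul_extInv_sub_fst_extMul_extInv]
  exact hH.mem_iff_sub_mem_fiberAtOne hone₂ hcoc hone₁ hbase _
end

section
/- Let G be a topological group which is compact, and let (C_n)_{n∈ℕ} be closed symmetric subsets containing the identity with C_n² ⊆ C_{n+1}, such that H = ⋃_n C_n is a closed subgroup of G. Then H = C_n for some n. -/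
/-!
By the Baire category theorem applied to the compact group `H`, some `C n` has nonempty interior
in `H`, so finitely many translates `g⁻¹ (C n ∩ H)` cover `H`. Each `g⁻¹` lies in some `C m`, and the
chain is increasing, so `H ⊆ C M * C M ⊆ C (M + 1)` for `M` large.
-/

open Pointwise Set

section

variable {G : Type*} {C : ℕ → Set G}

theorem monotone_of_one_mem_of_mul_subset_succ [MulOneClass G] (hone : ∀ n, (1 : G) ∈ C n)
    (hmul : ∀ n, C n * C n ⊆ C (n + 1)) : Monotone C :=
  monotone_nat_of_le_succ fun n x hx => by
    simpa using hmul n (mul_mem_mul hx (hone n))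

theorem exists_eq_univ_of_iUnion_eq_univ [Group G] [TopologicalSpace G] [IsTopologicalGroup G]
    [CompactSpace G] (hcl : ∀ n, IsClosed (C n)) (hone : ∀ n, (1 : G) ∈ C n)
    (hmul : ∀ n, C n * C n ⊆ C (n + 1)) (hcover : ⋃ n, C n = univ) :
    ∃ n, C n = univ := by
  have hmono := monotone_of_one_mem_of_mul_subset_succ hone hmul
  obtain ⟨n, hn⟩ := nonempty_interior_of_iUnion_of_closed hcl hcover
  obtain ⟨t, ht⟩ := compact_covered_by_mul_left_translates isCompact_univ hn
  have hmem (x : G) : ∃ m, x ∈ C m := mem_iUnion.mp (hcover ▸ mem_univ x)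
  choose m hm using hmem
  set M := max n (t.sup fun g => m g⁻¹)
  refine ⟨M + 1, eq_univ_of_forall fun y => ?_⟩
  obtain ⟨g, hg, hgy⟩ : ∃ g ∈ t, g * y ∈ C n := by simpa using ht (mem_univ y)
  have hg' : g⁻¹ ∈ C M := hmono (le_max_of_le_right (Finset.le_sup (f := fun g => m g⁻¹) hg)) (hm _)
  simpa using hmul M (mul_mem_mul hg' (hmono (le_max_left _ _) hgy))

end

theorem closed_union_chain_stabilizes_general {G : Type*} [Group G] [TopologicalSpace G]
    [IsTopologicalGroup G] [CompactSpace G]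
    (C : ℕ → Set G)
    (hcl : ∀ n, IsClosed (C n))
    (hone : ∀ n, (1 : G) ∈ C n)
    (hsq : ∀ n, C n * C n ⊆ C (n + 1))
    (H : Subgroup G) (hH : (H : Set G) = ⋃ n, C n)
    (hHcl : IsClosed (H : Set G)) :
    ∃ n, (H : Set G) = C n := by
  have hCH (n : ℕ) : C n ⊆ H := hH ▸ subset_iUnion C n
  have : CompactSpace H := isCompact_iff_compactSpace.mp hHcl.isCompact
  obtain ⟨n, hn⟩ := exists_eq_univ_of_iUnion_eq_univ (C := fun n => ((↑) : H → G) ⁻¹' C n)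
    (fun n => (hcl n).preimage continuous_subtype_val) hone
    (fun n x ⟨a, ha, b, hb, hab⟩ => hab ▸ hsq n (mul_mem_mul ha hb))
    (by simp [← preimage_iUnion, ← hH])
  exact ⟨n, (hCH n).antisymm' fun x hx => eq_univ_iff_forall.mp hn ⟨x, hx⟩⟩

/-- In a compact topological group, if `(C n)` are closed symmetric sets containing the
identity with `C n · C n ⊆ C (n+1)`, and `H = ⋃ n, C n` is a closed subgroup, then
`H = C n` for some `n`. -/
theorem closed_union_chain_stabilizes {G : Type*} [Group G] [TopologicalSpace G]
    [IsTopologicalGroup G] [CompactSpace G]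
    (C : ℕ → Set G)
    (hcl : ∀ n, IsClosed (C n))
    (hsym : ∀ n, (C n)⁻¹ = C n)
    (hone : ∀ n, (1 : G) ∈ C n)
    (hsq : ∀ n, C n * C n ⊆ C (n + 1))
    (H : Subgroup G) (hH : (H : Set G) = ⋃ n, C n)
    (hHcl : IsClosed (H : Set G)) :
    ∃ n, (H : Set G) = C n :=
  closed_union_chain_stabilizes_general C hcl hone hsq H hH hHcl
end
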